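/- Let D : [0,∞) → Prop and t ∈ [0,∞). If D t holds and there exists r ∈ [0, t) with ¬D r, then there exists t′ ∈ [0, t] satisfying the blame conditions for D at t. (Whenever the situation is dangerous at time t but was not always dangerous before t, a finite blame time exists.) -/

import Mathlib

open scoped NNReal

/-- `t'` satisfies the blame conditions for the predicate `D : [0,∞) → Prop` at time `t`:
`t' ≤ t`, `D r` holds for every `r ∈ (t', t]`, and for every `t'' ∈ [0, t')`
there exists `r' ∈ (t'', t']` with `¬ D r'`. -/
def BlameCond (D : ℝ≥0 → Prop) (t t' : ℝ≥0) : Prop :=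
  t' ≤ t ∧ (∀ r ∈ Set.Ioc t' t, D r) ∧
    ∀ t'' ∈ Set.Ico (0 : ℝ≥0) t', ∃ r' ∈ Set.Ioc t'' t', ¬ D r'

/-! The blame time is the supremum of the times up to `t` at which `D` fails: no failure
lies in `(t', t]`, and by the approximation property of suprema failures accumulate at `t'`
from below (or occur at `t'` itself). -/

section LastFailure

variable {α : Type*} [ConditionallyCompleteLinearOrder α] {D : α → Prop} {t : α}

noncomputable def lastFailure (D : α → Prop) (t : α) : α :=
  sSup {s | s ≤ t ∧ ¬ D s}

lemma bddAbove_failures (D : α → Prop) (t : α) : BddAbove {s | s ≤ t ∧ ¬ D s} :=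
  ⟨t, fun _ hs => hs.1⟩

lemma lastFailure_le (h : ∃ s ≤ t, ¬ D s) : lastFailure D t ≤ t :=
  csSup_le h fun _ hs => hs.1

lemma holds_of_lastFailure_lt {r : α} (hr : lastFailure D t < r) (hrt : r ≤ t) : D r := by
  by_contra hDr
  exact hr.not_ge (le_csSup (bddAbove_failures D t) ⟨hrt, hDr⟩)

lemma exists_failure_Ioc_of_lt_lastFailure (h : ∃ s ≤ t, ¬ D s) {s : α}
    (hs : s < lastFailure D t) : ∃ r ∈ Set.Ioc s (lastFailure D t), ¬ D r := by
  obtain ⟨r, hr, hsr⟩ := exists_lt_of_lt_csSup h hs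
  exact ⟨r, ⟨hsr, le_csSup (bddAbove_failures D t) hr⟩, hr.2⟩

end LastFailure

theorem blame_time_exists_general (D : ℝ≥0 → Prop) (t : ℝ≥0)
    (hnot : ∃ r ∈ Set.Ico (0 : ℝ≥0) t, ¬ D r) :
    ∃ t' ∈ Set.Icc (0 : ℝ≥0) t, BlameCond D t t' := by
  obtain ⟨r, hr, hDr⟩ := hnot
  have hfail : ∃ s ≤ t, ¬ D s := ⟨r, hr.2.le, hDr⟩
  have hle := lastFailure_le hfail
  exact ⟨lastFailure D t, ⟨zero_le, hle⟩, hle,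
    fun _ hr => holds_of_lastFailure_lt hr.1 hr.2,
    fun _ hs => exists_failure_Ioc_of_lt_lastFailure hfail hs.2⟩

/-- if the situation is dangerous at time `t` but was not always dangerous
before `t`, then a (finite) blame time exists. -/
theorem blame_time_exists (D : ℝ≥0 → Prop) (t : ℝ≥0)
    (hDt : D t) (hnot : ∃ r ∈ Set.Ico (0 : ℝ≥0) t, ¬ D r) :
    ∃ t' ∈ Set.Icc (0 : ℝ≥0) t, BlameCond D t t' :=
  blame_time_exists_general D t hnot
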